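/- Let |ξ| < π/2, 0 ≤ ρ < 1 and 0 ≤ γ < 1. If f(z) = z + Σ_{n=2}^∞ a_n z^n belongs to 𝒜 and its coefficients satisfy Σ_{n=2}^∞ [ (1-ρ)(n-1) sec ξ + (1-γ)(1 + nρ - ρ) ] |a_n| ≤ 1 - γ, then f belongs to the class 𝒮(ξ, γ, ρ). -/

import Mathlib

noncomputable section

open Complex Real Set

/-- The open unit disk in the complex plane. -/
def unitDisk : Set ℂ := Metric.ball 0 1

/-- The class 𝒜 of normalized analytic functions on the unit disk:
`f` analytic on `𝔻`, `f 0 = 0`, `f' 0 = 1`. -/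
def NormalizedAnalytic (f : ℂ → ℂ) : Prop :=
  AnalyticOn ℂ f unitDisk ∧ f 0 = 0 ∧ deriv f 0 = 1

/-- The spirallike class `𝒮(ξ, γ, ρ)`. -/
def SpiralS (ξ γ ρ : ℝ) (f : ℂ → ℂ) : Prop :=
  NormalizedAnalytic f ∧ Set.InjOn f unitDisk ∧
    ∀ z ∈ unitDisk, z ≠ 0 →
      (1 - (ρ : ℂ)) * f z + (ρ : ℂ) * z * deriv f z ≠ 0 ∧
      γ * Real.cos ξ <
        (Complex.exp (Complex.I * ξ) * (z * deriv f z) /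
          ((1 - (ρ : ℂ)) * f z + (ρ : ℂ) * z * deriv f z)).re

/-- The convex spirallike class `𝒦(ξ, γ, ρ)`. -/
def SpiralK (ξ γ ρ : ℝ) (f : ℂ → ℂ) : Prop :=
  NormalizedAnalytic f ∧ Set.InjOn f unitDisk ∧
    ∀ z ∈ unitDisk,
      deriv f z + (ρ : ℂ) * z * deriv (deriv f) z ≠ 0 ∧
      γ * Real.cos ξ <
        (Complex.exp (Complex.I * ξ) * (z * deriv (deriv f) z + deriv f z) /
          (deriv f z + (ρ : ℂ) * z * deriv (deriv f) z)).re

/-- The spirallike class `𝒮(ξ, γ)`. -/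
def SpiralS0 (ξ γ : ℝ) (f : ℂ → ℂ) : Prop :=
  NormalizedAnalytic f ∧ Set.InjOn f unitDisk ∧
    ∀ z ∈ unitDisk, z ≠ 0 →
      f z ≠ 0 ∧
      γ * Real.cos ξ <
        (Complex.exp (Complex.I * ξ) * (z * deriv f z) / f z).re

/-- The convex spirallike class `𝒦(ξ, γ)`. -/
def SpiralK0 (ξ γ : ℝ) (f : ℂ → ℂ) : Prop :=
  NormalizedAnalytic f ∧ Set.InjOn f unitDisk ∧
    ∀ z ∈ unitDisk,
      deriv f z ≠ 0 ∧
      γ * Real.cos ξ <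
        (Complex.exp (Complex.I * ξ) *
          (1 + z * deriv (deriv f) z / deriv f z)).re

/-- The class `ℛ^τ(ϑ, δ)`. -/
def ClassR (τ : ℂ) (ϑ δ : ℝ) (f : ℂ → ℂ) : Prop :=
  NormalizedAnalytic f ∧ Set.InjOn f unitDisk ∧
    ∀ z ∈ unitDisk,
      norm
        (((1 - (ϑ : ℂ)) * (if z = 0 then 1 else f z / z) + (ϑ : ℂ) * deriv f z - 1) /
          (2 * τ * (1 - (δ : ℂ)) +
            (1 - (ϑ : ℂ)) * (if z = 0 then 1 else f z / z) + (ϑ : ℂ) * deriv f z - 1)) < 1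

/-- The Pascal distribution series
`Θ_q^m(z) = z + ∑_{n=2}^∞ C(n+m-2, m-1) q^(n-1) (1-q)^m z^n`. -/
def pascalTheta (m : ℕ) (q : ℝ) : ℂ → ℂ := fun z =>
  z + ∑' n : ℕ, ((n + m).choose (m - 1) : ℂ) * (q : ℂ) ^ (n + 1) * (1 - (q : ℂ)) ^ m * z ^ (n + 2)

/-- The integral operator `𝒢_q^m(z) = ∫_0^z Θ_q^m(t)/t dt
= z + ∑_{n=2}^∞ C(n+m-2, m-1) q^(n-1) (1-q)^m z^n / n`. -/
def pascalG (m : ℕ) (q : ℝ) : ℂ → ℂ := fun z =>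
  z + ∑' n : ℕ, ((n + m).choose (m - 1) : ℂ) * (q : ℂ) ^ (n + 1) * (1 - (q : ℂ)) ^ m *
    z ^ (n + 2) / ((n : ℂ) + 2)

/-!
Write `G = (1 - ρ) f + ρ z f'` and `N = z f' - G`. From `f = z + ∑ aₙ zⁿ` one gets
`G - z = ∑ (1 + (n - 1)ρ) aₙ zⁿ` and `N = ∑ (1 - ρ)(n - 1) aₙ zⁿ`, so for `r = |z|` we have
`|N| ≤ r² P` and `|G| ≥ r - r² Q`, where `P`, `Q` are the same sums with `|aₙ|` in place of `aₙ zⁿ`.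
The coefficient condition reads `P sec ξ + (1 - γ) Q ≤ 1 - γ`, which forces
`|N| < (1 - γ) cos ξ |G|`: then `e^{iξ} z f' / G = e^{iξ} (1 + N / G)` has real part above
`cos ξ - (1 - γ) cos ξ = γ cos ξ`. Since `P + Q = ∑ n |aₙ| ≤ 1`, also `|f' - 1| ≤ |z|`, so `f - id` is a
contraction on each smaller disc, and `f` is univalent.
-/

theorem norm_le_pow_mul_of_hasSum {x : ℕ → ℝ} {c : ℕ → ℂ} {z S : ℂ} {B : ℝ} {k : ℕ}
    (hx : ∀ n, 0 ≤ x n) (hz : ‖z‖ ≤ 1) (hS : HasSum (fun n => (x n : ℂ) * c n * z ^ (n + k)) S)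
    (hB : HasSum (fun n => x n * ‖c n‖) B) : ‖S‖ ≤ ‖z‖ ^ k * B := by
  refine hS.norm_le_of_bounded (hB.mul_left (‖z‖ ^ k)) fun n => ?_
  have hzn : ‖z‖ ^ n ≤ 1 := pow_le_one₀ (norm_nonneg z) hz
  have hxc : 0 ≤ x n * ‖c n‖ := mul_nonneg (hx n) (norm_nonneg _)
  calc ‖(x n : ℂ) * c n * z ^ (n + k)‖ = x n * ‖c n‖ * (‖z‖ ^ n * ‖z‖ ^ k) := by
        rw [norm_mul, norm_mul, norm_real, Real.norm_of_nonneg (hx n), norm_pow, pow_add]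
    _ ≤ x n * ‖c n‖ * (1 * ‖z‖ ^ k) := by gcongr
    _ = ‖z‖ ^ k * (x n * ‖c n‖) := by ring

theorem exists_hasSum_of_summable_mul_add_mul {p q : ℕ → ℝ} {α β : ℝ} (hα : 0 < α)
    (hβ : 0 < β) (hp : ∀ n, 0 ≤ p n) (hq : ∀ n, 0 ≤ q n)
    (h : Summable fun n => α * p n + β * q n) :
    ∃ P Q, HasSum p P ∧ HasSum q Q ∧ HasSum (fun n => α * p n + β * q n) (α * P + β * Q) := by
  have hp' : Summable p := by
    refine .of_nonneg_of_le hp (fun n => ?_) (h.mul_left α⁻¹)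
    rw [mul_add, inv_mul_cancel_left₀ hα.ne']
    linarith [mul_nonneg (inv_nonneg.2 hα.le) (mul_nonneg hβ.le (hq n))]
  have hq' : Summable q := by
    refine .of_nonneg_of_le hq (fun n => ?_) (h.mul_left β⁻¹)
    rw [mul_add, inv_mul_cancel_left₀ hβ.ne']
    linarith [mul_nonneg (inv_nonneg.2 hβ.le) (mul_nonneg hα.le (hp n))]
  exact ⟨_, _, hp'.hasSum, hq'.hasSum, (hp'.hasSum.mul_left α).add (hq'.hasSum.mul_left β)⟩

theorem exists_hasSum_of_tsum_inv_cos_mul_add_le {ξ γ : ℝ} {p q : ℕ → ℝ}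
    (hcos : 0 < Real.cos ξ) (hγ0 : 0 ≤ γ) (hγ1 : γ < 1) (hp : ∀ n, 0 ≤ p n)
    (hq : ∀ n, 0 ≤ q n) (hs : Summable fun n => (Real.cos ξ)⁻¹ * p n + (1 - γ) * q n)
    (hle : ∑' n, ((Real.cos ξ)⁻¹ * p n + (1 - γ) * q n) ≤ 1 - γ) :
    ∃ P Q, HasSum p P ∧ HasSum q Q ∧ P + Q ≤ 1 ∧ P ≤ (1 - γ) * Real.cos ξ * (1 - Q) := by
  obtain ⟨P, Q, hP, hQ, hPQ⟩ :=
    exists_hasSum_of_summable_mul_add_mul (inv_pos.2 hcos) (sub_pos.2 hγ1) hp hq hs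
  rw [hPQ.tsum_eq] at hle
  have hsec : 1 ≤ (Real.cos ξ)⁻¹ := (one_le_inv₀ hcos).2 (Real.cos_le_one ξ)
  have hP0 : 0 ≤ P := hP.nonneg hp
  refine ⟨P, Q, hP, hQ, by nlinarith, ?_⟩
  calc P = Real.cos ξ * ((Real.cos ξ)⁻¹ * P) := by field_simp
    _ ≤ Real.cos ξ * ((1 - γ) - (1 - γ) * Q) := by gcongr; linarith
    _ = (1 - γ) * Real.cos ξ * (1 - Q) := by ring

theorem hasSum_deriv_sub_one {f : ℂ → ℂ} {a : ℕ → ℂ}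
    (ha : Summable fun n : ℕ => ((n : ℝ) + 2) * ‖a (n + 2)‖)
    (hrep : ∀ z ∈ unitDisk, HasSum (fun n : ℕ => a (n + 2) * z ^ (n + 2)) (f z - z))
    {z : ℂ} (hz : z ∈ unitDisk) :
    HasSum (fun n : ℕ => ((n + 2 : ℝ) : ℂ) * a (n + 2) * z ^ (n + 1)) (deriv f z - 1) := by
  have hterm : ∀ (n : ℕ) (w : ℂ), HasDerivAt (fun w => a (n + 2) * w ^ (n + 2))
      (((n + 2 : ℝ) : ℂ) * a (n + 2) * w ^ (n + 1)) w := fun n w =>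
    ((hasDerivAt_pow (n + 2) w).const_mul (a (n + 2))).congr_deriv (by push_cast; ring)
  have hbound : ∀ (n : ℕ), ∀ w ∈ unitDisk,
      ‖((n + 2 : ℝ) : ℂ) * a (n + 2) * w ^ (n + 1)‖ ≤ ((n : ℝ) + 2) * ‖a (n + 2)‖ := by
    intro n w hw
    rw [norm_mul, norm_mul, norm_real, Real.norm_of_nonneg (by positivity), norm_pow]
    exact mul_le_of_le_one_right (by positivity)
      (pow_le_one₀ (norm_nonneg w) (mem_ball_zero_iff.1 hw).le)
  have h0 : (0 : ℂ) ∈ unitDisk := Metric.mem_ball_self one_pos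
  have htail := hasDerivAt_tsum_of_isPreconnected ha Metric.isOpen_ball
    (convex_ball (0 : ℂ) 1).isPreconnected (fun n w _ => hterm n w) hbound h0
    (hrep 0 h0).summable hz
  have hf : f =ᶠ[nhds z] fun w => w + ∑' n : ℕ, a (n + 2) * w ^ (n + 2) := by
    filter_upwards [Metric.isOpen_ball.mem_nhds hz] with w hw
    rw [(hrep w hw).tsum_eq, add_sub_cancel]
  have hid_add : HasDerivAt (fun w => w + ∑' n : ℕ, a (n + 2) * w ^ (n + 2))
      (1 + ∑' n : ℕ, ((n + 2 : ℝ) : ℂ) * a (n + 2) * z ^ (n + 1)) z :=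
    (hasDerivAt_id' z).add htail
  rw [hf.deriv_eq, hid_add.deriv, add_sub_cancel_left]
  exact (Summable.of_norm_bounded ha fun n => hbound n z hz).hasSum

theorem injOn_unitDisk_of_norm_deriv_sub_one_le {f : ℂ → ℂ}
    (hf : DifferentiableOn ℂ f unitDisk) (hf' : ∀ z ∈ unitDisk, ‖deriv f z - 1‖ ≤ ‖z‖) :
    InjOn f unitDisk := by
  intro z₁ h₁ z₂ h₂ heq
  set s := max ‖z₁‖ ‖z₂‖
  have hs : s < 1 := max_lt (mem_ball_zero_iff.1 h₁) (mem_ball_zero_iff.1 h₂)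
  have hsub : Metric.closedBall (0 : ℂ) s ⊆ unitDisk := Metric.closedBall_subset_ball hs
  have hcontract : ‖(f z₂ - z₂) - (f z₁ - z₁)‖ ≤ s * ‖z₂ - z₁‖ := by
    refine (convex_closedBall 0 s).norm_image_sub_le_of_norm_hasDerivWithin_le
      (f := fun w => f w - w) (f' := fun w => deriv f w - 1) (fun w hw => ?_) (fun w hw => ?_)
      (mem_closedBall_zero_iff.2 (le_max_left _ _)) (mem_closedBall_zero_iff.2 (le_max_right _ _))
    · have hw' := hsub hw
      exact ((hf w hw').differentiableAt (Metric.isOpen_ball.mem_nhds hw')).hasDerivAt.sub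
        (hasDerivAt_id w) |>.hasDerivWithinAt
    · exact (hf' w (hsub hw)).trans (mem_closedBall_zero_iff.1 hw)
  rw [heq, sub_sub_sub_cancel_left, norm_sub_rev] at hcontract
  by_contra hne
  have hpos : 0 < ‖z₂ - z₁‖ := norm_pos_iff.2 (sub_ne_zero.2 (Ne.symm hne))
  nlinarith

theorem hasSum_convexComb_sub_and_sub_convexComb {a : ℕ → ℂ} {z w w' : ℂ} {ρ : ℝ}
    (hw : HasSum (fun n : ℕ => a (n + 2) * z ^ (n + 2)) (w - z))
    (hw' : HasSum (fun n : ℕ => ((n + 2 : ℝ) : ℂ) * a (n + 2) * z ^ (n + 1)) (w' - 1)) :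
    HasSum (fun n : ℕ => ((1 + ((n : ℝ) + 2) * ρ - ρ : ℝ) : ℂ) * a (n + 2) * z ^ (n + 2))
        ((1 - (ρ : ℂ)) * w + ρ * z * w' - z) ∧
      HasSum (fun n : ℕ => ((1 - ρ) * ((n : ℝ) + 1) : ℝ) * a (n + 2) * z ^ (n + 2))
        (z * w' - ((1 - (ρ : ℂ)) * w + ρ * z * w')) := by
  have hzw' : HasSum (fun n : ℕ => ((n : ℂ) + 2) * a (n + 2) * z ^ (n + 2)) (z * w' - z) := by
    rw [show z * w' - z = z * (w' - 1) by ring]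
    exact (hw'.mul_left z).congr_fun fun n => by push_cast; ring
  have hG : HasSum (fun n : ℕ => ((1 + ((n : ℝ) + 2) * ρ - ρ : ℝ) : ℂ) * a (n + 2) * z ^ (n + 2))
      ((1 - (ρ : ℂ)) * w + ρ * z * w' - z) := by
    rw [show (1 - (ρ : ℂ)) * w + ρ * z * w' - z = (1 - ρ) * (w - z) + ρ * (z * w' - z) by ring]
    exact ((hw.mul_left (1 - (ρ : ℂ))).add (hzw'.mul_left (ρ : ℂ))).congr_fun fun n => by
      push_cast; ring
  refine ⟨hG, ?_⟩
  rw [show z * w' - ((1 - (ρ : ℂ)) * w + ρ * z * w') =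
    (z * w' - z) - ((1 - (ρ : ℂ)) * w + ρ * z * w' - z) by ring]
  exact (hzw'.sub hG).congr_fun fun n => by push_cast; ring

theorem norm_sub_lt_mul_norm {u G z : ℂ} {P Q k : ℝ} (hz0 : z ≠ 0) (hz1 : ‖z‖ < 1)
    (hk : 0 < k) (hPQ : P ≤ k * (1 - Q)) (hu : ‖u - G‖ ≤ ‖z‖ ^ 2 * P)
    (hG : ‖G - z‖ ≤ ‖z‖ ^ 2 * Q) : ‖u - G‖ < k * ‖G‖ := by
  have hr : 0 < ‖z‖ := norm_pos_iff.2 hz0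
  have hGz : ‖z‖ - ‖G‖ ≤ ‖G - z‖ := by rw [norm_sub_rev]; exact norm_sub_norm_le z G
  nlinarith [mul_pos hk (mul_pos hr (sub_pos.2 hz1)), sq_nonneg ‖z‖]

theorem ne_zero_and_sub_lt_re_exp_mul_div {u G : ℂ} {ξ δ : ℝ} (h : ‖u - G‖ < δ * ‖G‖) :
    G ≠ 0 ∧ Real.cos ξ - δ < (exp (I * ξ) * u / G).re := by
  have hG : G ≠ 0 := by
    rintro rfl
    rw [sub_zero, norm_zero, mul_zero] at h
    exact (norm_nonneg u).not_gt h
  refine ⟨hG, ?_⟩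
  have hsplit : exp (I * ξ) * u / G = exp (ξ * I) + exp (ξ * I) * ((u - G) / G) := by
    rw [mul_comm I]
    field_simp
    ring
  have hsmall : ‖exp (ξ * I) * ((u - G) / G)‖ < δ := by
    rw [norm_mul, norm_exp_ofReal_mul_I, one_mul, norm_div,
      div_lt_iff₀ (norm_pos_iff.2 hG)]
    exact h
  rw [hsplit, add_re, exp_ofReal_mul_I_re]
  linarith [neg_abs_le (exp (ξ * I) * ((u - G) / G)).re,
    abs_re_le_norm (exp (ξ * I) * ((u - G) / G))]

/-- sufficient coefficient condition for membership in `𝒮(ξ, γ, ρ)`. -/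
theorem stmt0 (ξ ρ γ : ℝ) (hξ : |ξ| < π / 2) (hρ0 : 0 ≤ ρ) (hρ1 : ρ < 1)
    (hγ0 : 0 ≤ γ) (hγ1 : γ < 1) (f : ℂ → ℂ) (a : ℕ → ℂ)
    (hf : AnalyticOn ℂ f unitDisk)
    (hrep : ∀ z ∈ unitDisk, HasSum (fun n : ℕ => a (n + 2) * z ^ (n + 2)) (f z - z))
    (hsummable : Summable (fun n : ℕ =>
      ((1 - ρ) * ((n : ℝ) + 1) * (Real.cos ξ)⁻¹ +
        (1 - γ) * (1 + ((n : ℝ) + 2) * ρ - ρ)) * ‖a (n + 2)‖))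
    (hle : ∑' n : ℕ,
      ((1 - ρ) * ((n : ℝ) + 1) * (Real.cos ξ)⁻¹ +
        (1 - γ) * (1 + ((n : ℝ) + 2) * ρ - ρ)) * ‖a (n + 2)‖ ≤ 1 - γ) :
    SpiralS ξ γ ρ f := by
  have hcos : 0 < Real.cos ξ := Real.cos_pos_of_mem_Ioo (abs_lt.1 hξ)
  have hp0 : ∀ n : ℕ, 0 ≤ (1 - ρ) * ((n : ℝ) + 1) := fun n =>
    mul_nonneg (sub_nonneg.2 hρ1.le) (by positivity)
  have hq0 : ∀ n : ℕ, 0 ≤ 1 + ((n : ℝ) + 2) * ρ - ρ := fun n => by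
    nlinarith [n.cast_nonneg (α := ℝ)]
  obtain ⟨P, Q, hP, hQ, hPQ1, hPQ⟩ := exists_hasSum_of_tsum_inv_cos_mul_add_le hcos hγ0 hγ1
    (fun n => mul_nonneg (hp0 n) (norm_nonneg (a (n + 2))))
    (fun n => mul_nonneg (hq0 n) (norm_nonneg (a (n + 2))))
    (hsummable.congr fun n => by ring) ((tsum_congr fun n => by ring).trans_le hle)
  have hN : HasSum (fun n : ℕ => ((n : ℝ) + 2) * ‖a (n + 2)‖) (P + Q) :=
    (hP.add hQ).congr_fun fun n => by ring
  have hderiv := fun z (hz : z ∈ unitDisk) => hasSum_deriv_sub_one hN.summable hrep hz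
  have hderiv_le : ∀ z ∈ unitDisk, ‖deriv f z - 1‖ ≤ ‖z‖ := fun z hz => by
    have h := norm_le_pow_mul_of_hasSum (fun n => by positivity) (mem_ball_zero_iff.1 hz).le
      (hderiv z hz) hN
    rw [pow_one] at h
    exact h.trans (mul_le_of_le_one_right (norm_nonneg z) hPQ1)
  have h0 : (0 : ℂ) ∈ unitDisk := Metric.mem_ball_self one_pos
  refine ⟨⟨hf, ?_, ?_⟩, injOn_unitDisk_of_norm_deriv_sub_one_le hf.differentiableOn hderiv_le,
    fun z hz hz0 => ?_⟩
  · simpa using (hrep 0 h0).tsum_eq.symm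
  · simpa [sub_eq_zero] using hderiv_le 0 h0
  have hr : ‖z‖ < 1 := mem_ball_zero_iff.1 hz
  obtain ⟨hG, hNG⟩ := hasSum_convexComb_sub_and_sub_convexComb (hrep z hz) (hderiv z hz)
  have hlt := norm_sub_lt_mul_norm hz0 hr (mul_pos (sub_pos.2 hγ1) hcos) hPQ
    (norm_le_pow_mul_of_hasSum hp0 hr.le hNG hP) (norm_le_pow_mul_of_hasSum hq0 hr.le hG hQ)
  obtain ⟨hG0, hre⟩ := ne_zero_and_sub_lt_re_exp_mul_div (ξ := ξ) hlt
  exact ⟨hG0, by linarith⟩
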